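/- arXiv:2108.02441 — 14 statements merged into one kernel-verified Lean document; each statement's English description precedes it below -/
import Mathlib

section
/- Let a, b, c be positive integers with C_1(a,b,c) = 0, b ≥ max{a,c}, and min{a,c} > 1. Then b = ac + √((a²−1)(c²−1)), a = bc − √((b²−1)(c²−1)), and c = ab − √((a²−1)(b²−1)) (all three square roots being of non-negative integers). -/
/-- Cayley's cubic form `C_s(x,y,z) = s(x²+y²+z²) − s³ − 2xyz`. -/
def cayley (s x y z : ℤ) : ℤ := s * (x ^ 2 + y ^ 2 + z ^ 2) - s ^ 3 - 2 * x * y * z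

theorem stmt_0 (a b c : ℤ) (ha : 0 < a) (hb : 0 < b) (hc : 0 < c)
    (heq : cayley 1 a b c = 0) (hbmax : max a c ≤ b) (hmin : 1 < min a c) :
    (b : ℝ) = a * c + Real.sqrt (((a : ℝ) ^ 2 - 1) * ((c : ℝ) ^ 2 - 1)) ∧
    (a : ℝ) = b * c - Real.sqrt (((b : ℝ) ^ 2 - 1) * ((c : ℝ) ^ 2 - 1)) ∧
    (c : ℝ) = a * b - Real.sqrt (((a : ℝ) ^ 2 - 1) * ((b : ℝ) ^ 2 - 1)) := by
  unfold cayley at heq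
  have hab : a ≤ b := le_trans (le_max_left a c) hbmax
  have hcb : c ≤ b := le_trans (le_max_right a c) hbmax
  have ha2 : 2 ≤ a := lt_of_lt_of_le hmin (min_le_left a c)
  have hc2 : 2 ≤ c := lt_of_lt_of_le hmin (min_le_right a c)
  have hbac : a * c ≤ b := by nlinarith [sq_nonneg (a*c - b), sq_nonneg (a - c), mul_pos ha hc]
  have habc : a ≤ b * c := le_trans hab (le_mul_of_one_le_right (le_of_lt hb) (by omega))
  have hcab : c ≤ a * b := le_trans hcb (le_mul_of_one_le_left (le_of_lt hb) (by omega))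
  have hZ : a^2 + b^2 + c^2 - 1 - 2*a*b*c = 0 := by linear_combination heq
  have hR : ((a:ℝ))^2 + b^2 + c^2 - 1 - 2*a*b*c = 0 := by exact_mod_cast hZ
  have hbacR : (a:ℝ) * c ≤ b := by exact_mod_cast hbac
  have habcR : (a:ℝ) ≤ b * c := by exact_mod_cast habc
  have hcabR : (c:ℝ) ≤ a * b := by exact_mod_cast hcab
  refine ⟨?_, ?_, ?_⟩
  · have h1 : ((a:ℝ)^2 - 1) * ((c:ℝ)^2 - 1) = ((b:ℝ) - a*c)^2 := by nlinarith
    rw [h1, Real.sqrt_sq (by linarith)]; ring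
  · have h1 : ((b:ℝ)^2 - 1) * ((c:ℝ)^2 - 1) = ((b:ℝ)*c - a)^2 := by nlinarith
    rw [h1, Real.sqrt_sq (by linarith)]; ring
  · have h1 : ((a:ℝ)^2 - 1) * ((b:ℝ)^2 - 1) = ((a:ℝ)*b - c)^2 := by nlinarith
    rw [h1, Real.sqrt_sq (by linarith)]; ring
end

section
/- Let a and c be real numbers with a > 1 and c ≥ 1. If c ≤ ac − √((a²−1)(c²−1)), then 2c² ≤ a + 1. -/
theorem stmt_1 (a c : ℝ) (ha : 1 < a) (hc : 1 ≤ c)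
    (h : c ≤ a * c - Real.sqrt ((a ^ 2 - 1) * (c ^ 2 - 1))) :
    2 * c ^ 2 ≤ a + 1 := by
  have hX : (0:ℝ) ≤ (a ^ 2 - 1) * (c ^ 2 - 1) := by
    apply mul_nonneg <;> nlinarith
  have hs := Real.sq_sqrt hX
  have hnn := Real.sqrt_nonneg ((a ^ 2 - 1) * (c ^ 2 - 1))
  nlinarith [sq_nonneg (Real.sqrt ((a ^ 2 - 1) * (c ^ 2 - 1)) - c * (a - 1)),
    mul_pos (sub_pos.mpr ha) (lt_of_lt_of_le one_pos hc)]
end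

section
/- Let a, b, c be positive integers with C_1(a,b,c) = 0, 1 < min{a,c}, and max{a,c} ≤ b. Then b' := 2ac − b is a positive integer satisfying C_1(a,b',c) = 0 and b' ≤ max{a,c} (so the triple (a,b',c) is a solution with strictly smaller maximal element whenever b > max{a,c}). -/
theorem stmt_2 (a b c : ℤ) (ha : 0 < a) (hb : 0 < b) (hc : 0 < c)
    (heq : cayley 1 a b c = 0) (hmin : 1 < min a c) (hbmax : max a c ≤ b) :
    0 < 2 * a * c - b ∧ cayley 1 a (2 * a * c - b) c = 0 ∧ 2 * a * c - b ≤ max a c := by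
  have ha1 : 1 < a := lt_of_lt_of_le hmin (min_le_left a c)
  have hc1 : 1 < c := lt_of_lt_of_le hmin (min_le_right a c)
  simp only [cayley] at heq ⊢
  have hprod : (2 * a * c - b) * b = a ^ 2 + c ^ 2 - 1 := by nlinarith [heq]
  have hpos : 0 < 2 * a * c - b := by
    have h1 : 0 < a ^ 2 + c ^ 2 - 1 := by nlinarith
    by_contra h
    push_neg at h
    nlinarith
  refine ⟨hpos, by linear_combination heq, ?_⟩
  rcases max_cases a c with ⟨hm, hle⟩ | ⟨hm, hlt⟩ <;> rw [hm] at hbmax ⊢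
  · -- max = a, c ≤ a
    have hf : (a - b) * (a - (2 * a * c - b)) < 0 := by nlinarith
    nlinarith
  · -- max = c, a < c
    have hf : (c - b) * (c - (2 * a * c - b)) < 0 := by nlinarith
    nlinarith
end

section
/- Let p and x be positive integers and n, m positive integers. If C_1(x, T_n(p), T_m(p)) = 0, then x = T_{n+m}(p) or x = T_{|n−m|}(p). -/
/-- Chebyshev polynomials of the first kind evaluated at an integer. -/
def chebT (x : ℤ) : ℕ → ℤ
  | 0 => 1
  | 1 => x
  | n + 2 => 2 * x * chebT x (n + 1) - chebT x n

lemma prodSum (x : ℤ) : ∀ m d : ℕ, chebT x (d + 2 * m) + chebT x d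
    = 2 * chebT x (d + m) * chebT x m
  | 0, d => by simp [chebT]; ring
  | 1, d => by
    have e : d + 2 * 1 = d + 2 := by omega
    rw [e, show d + 1 + 1 = d + 2 from rfl]
    simp [chebT]; ring
  | m + 2, d => by
    have h1 := prodSum x (m + 1) (d + 1)
    have h2 := prodSum x m (d + 2)
    have e1 : d + 2 * (m + 2) = (d + 2 * m + 2) + 2 := by omega
    have e2 : d + 1 + 2 * (m + 1) = (d + 2 * m + 1) + 2 := by omega
    have e3 : d + 2 + 2 * m = d + 2 * m + 2 := by omega
    have e4 : d + 1 + (m + 1) = (d + m) + 2 := by omega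
    have e5 : d + 2 + m = (d + m) + 2 := by omega
    have e6 : d + (m + 2) = (d + m) + 2 := by omega
    rw [e2, e4] at h1
    rw [e3, e5] at h2
    rw [e1, e6]
    simp only [chebT] at *
    ring_nf at *
    linear_combination 2 * x * h1 - h2

lemma aux (p x : ℤ) (n m : ℕ) (hmn : m ≤ n)
    (heq : cayley 1 x (chebT p n) (chebT p m) = 0) :
    x = chebT p (n + m) ∨ x = chebT p (n - m) := by
  have key1 := prodSum p m (n - m)
  have key2 := prodSum p (n - m) (2 * m)
  have key3 := prodSum p n 0
  have key4 := prodSum p m 0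
  rw [show n - m + 2 * m = n + m from by omega, show n - m + m = n from by omega] at key1
  rw [show 2 * m + 2 * (n - m) = 2 * n from by omega,
      show 2 * m + (n - m) = n + m from by omega] at key2
  rw [show (0 : ℕ) + 2 * n = 2 * n from by omega, show (0 : ℕ) + n = n from by omega] at key3
  rw [show (0 : ℕ) + 2 * m = 2 * m from by omega, show (0 : ℕ) + m = m from by omega] at key4
  unfold cayley at heq
  simp only [chebT] at key3 key4
  have h2 : 2 * ((x - chebT p (n + m)) * (x - chebT p (n - m))) = 0 := by
    linear_combination 2 * heq - 2 * x * key1 - key2 + key3 + key4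
  have h3 : (x - chebT p (n + m)) * (x - chebT p (n - m)) = 0 := by
    rcases mul_eq_zero.mp h2 with h | h
    · norm_num at h
    · exact h
  rcases mul_eq_zero.mp h3 with h | h
  · left; linarith
  · right; linarith

theorem stmt_4 (p x : ℤ) (hp : 0 < p) (hx : 0 < x) (n m : ℕ) (hn : 0 < n) (hm : 0 < m)
    (heq : cayley 1 x (chebT p n) (chebT p m) = 0) :
    x = chebT p (n + m) ∨ x = chebT p ((n : ℤ) - m).natAbs := by
  rcases le_total m n with h | h
  · have := aux p x n m h heq
    rwa [show ((n : ℤ) - m).natAbs = n - m from by omega]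
  · have heq' : cayley 1 x (chebT p m) (chebT p n) = 0 := by
      unfold cayley at heq ⊢; linear_combination heq
    have := aux p x m n h heq'
    rw [show ((n : ℤ) - m).natAbs = m - n from by omega]
    rwa [Nat.add_comm m n] at this
end

section
/- For every integer p and all non-negative integers n and m, the triple (T_n(p), T_{n+m}(p), T_m(p)) solves Cayley's equation with s = 1; that is, T_n(p)² + T_{n+m}(p)² + T_m(p)² = 1 + 2·T_n(p)·T_{n+m}(p)·T_m(p). -/
/-- Shifted Chebyshev polynomials of the second kind: `chebV x n = U_{n-1}(x)`. -/
def chebV (x : ℤ) : ℕ → ℤ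
  | 0 => 0
  | 1 => 1
  | n + 2 => 2 * x * chebV x (n + 1) - chebV x n

lemma stepTV (p : ℤ) : ∀ n,
    chebT p (n + 1) = p * chebT p n + (p ^ 2 - 1) * chebV p n ∧
    chebV p (n + 1) = chebT p n + p * chebV p n := by
  intro n
  induction n using Nat.twoStepInduction with
  | zero => simp [chebT, chebV]
  | one => constructor <;> simp [chebT, chebV] <;> ring
  | more n ih1 ih2 =>
    obtain ⟨h1, h2⟩ := ih1
    obtain ⟨h3, h4⟩ := ih2
    constructor
    · show 2 * p * chebT p (n + 2) - chebT p (n + 1) =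
        p * chebT p (n + 2) + (p ^ 2 - 1) * (2 * p * chebV p (n + 1) - chebV p n)
      linear_combination p * h3 + (p ^ 2 - 1) * h1 - p * (p ^ 2 - 1) * h2
    · show 2 * p * chebV p (n + 1 + 1) - chebV p (n + 1) =
        chebT p (n + 2) + p * chebV p (n + 2)
      linear_combination p * h4 - h3

lemma addTV (p : ℤ) (m : ℕ) : ∀ n,
    chebT p (n + m) = chebT p n * chebT p m + (p ^ 2 - 1) * chebV p n * chebV p m ∧
    chebV p (n + m) = chebV p n * chebT p m + chebT p n * chebV p m := by
  intro n
  induction n with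
  | zero => simp [chebT, chebV]
  | succ n ih =>
    obtain ⟨h1, h2⟩ := ih
    obtain ⟨s1, s2⟩ := stepTV p n
    have : n + 1 + m = (n + m) + 1 := by omega
    rw [this]
    obtain ⟨t1, t2⟩ := stepTV p (n + m)
    constructor
    · rw [t1, s1, s2, h1, h2]; ring
    · rw [t2, s1, s2, h1, h2]; ring

lemma pellTV (p : ℤ) : ∀ n, chebT p n ^ 2 - (p ^ 2 - 1) * chebV p n ^ 2 = 1 := by
  intro n
  induction n with
  | zero => simp [chebT, chebV]
  | succ n ih =>
    obtain ⟨s1, s2⟩ := stepTV p n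
    rw [s1, s2]
    linear_combination ih

theorem stmt_5 (p : ℤ) (n m : ℕ) :
    chebT p n ^ 2 + chebT p (n + m) ^ 2 + chebT p m ^ 2 =
      1 + 2 * chebT p n * chebT p (n + m) * chebT p m := by
  obtain ⟨h1, -⟩ := addTV p m n
  have ha := pellTV p n
  have hb := pellTV p m
  rw [h1]
  linear_combination (1 - chebT p m ^ 2) * ha - (p ^ 2 - 1) * chebV p n ^ 2 * hb
end

section
/- Every positive integer solution of Cayley's equation with s = 1 is given by Chebyshev polynomials: if a, b, c are positive integers with C_1(a,b,c) = 0 and b ≥ max{a,c}, then there exist a positive integer p and non-negative integers n and m such that a = T_n(p), b = T_{n+m}(p), and c = T_m(p). -/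
lemma chebT_rec (x : ℤ) (n : ℕ) : chebT x (n+2) = 2 * x * chebT x (n+1) - chebT x n := rfl

lemma cheb_id (p : ℤ) : ∀ k j : ℕ, 2 * chebT p (j + k) * chebT p k = chebT p (j + 2*k) + chebT p j := by
  intro k
  induction k using Nat.twoStepInduction with
  | zero => intro j; simp [chebT]; ring
  | one =>
    intro j
    have h : chebT p (j + 2*1) = 2 * p * chebT p (j+1) - chebT p j := by
      exact chebT_rec p j
    rw [h]; simp [chebT]; ring
  | more k ih1 ih2 =>
    intro j
    have h1 := ih2 (j+1)
    have h2 := ih1 (j+2)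
    have e1 : j + 1 + (k+1) = j + k + 2 := by omega
    have e2 : j + 2 + k = j + k + 2 := by omega
    have e3 : j + 1 + 2*(k+1) = j + (2*k+3) := by omega
    have e4 : j + 2 + 2*k = j + (2*k+2) := by omega
    rw [e1, e3] at h1
    rw [e2, e4] at h2
    have h3 : chebT p (k+2) = 2 * p * chebT p (k+1) - chebT p k := chebT_rec p k
    have h4 : chebT p (j + 2*(k+2)) = 2 * p * chebT p (j + (2*k+3)) - chebT p (j + (2*k+2)) := by
      have : j + 2*(k+2) = (j + (2*k+2)) + 2 := by omega
      rw [this, chebT_rec]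
      congr 2 <;> omega
    have h5 : chebT p (j+2) = 2 * p * chebT p (j+1) - chebT p j := chebT_rec p j
    have e5 : j + (k+2) = j + k + 2 := by omega
    rw [e5, h3, h4]
    linear_combination 2 * p * h1 - h2 - h5

lemma key : ∀ N : ℕ, ∀ a b c : ℤ, b.toNat ≤ N → 0 < a → 0 < b → 0 < c →
    cayley 1 a b c = 0 → c ≤ a → a ≤ b →
    ∃ p : ℤ, 0 < p ∧ ∃ n m : ℕ, a = chebT p n ∧ b = chebT p (n + m) ∧ c = chebT p m := by
  intro N
  induction N with
  | zero => intro a b c hN ha hb hc _ _ _; omega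
  | succ N ih =>
    intro a b c hN ha hb hc heq hca hab
    unfold cayley at heq
    by_cases hab' : a = b
    · -- base case: b = a forces c = 1
      have hc1 : c = 1 := by
        have h1 : (c - 1) * (2 * a ^ 2 - c - 1) = 0 := by
          subst hab'; linear_combination -heq
        rcases mul_eq_zero.1 h1 with h | h
        · linarith
        · nlinarith
      refine ⟨a, ha, 1, 0, by simp [chebT], by simp [chebT]; omega, by simp [chebT, hc1]⟩
    · have hlt : a < b := lt_of_le_of_ne hab hab'
      set d : ℤ := 2 * a * c - b with hd
      have h2 : d * b = a ^ 2 + c ^ 2 - 1 := by rw [hd]; linear_combination -heq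
      have hdpos : 0 < d := by
        rcases le_or_gt d 0 with h | h
        · nlinarith
        · exact h
      have hdle : d ≤ a := by
        by_contra h
        push_neg at h
        nlinarith [mul_nonneg (by linarith : (0:ℤ) ≤ c - 1) (by nlinarith : (0:ℤ) ≤ 2*a^2 - c - 1),
          mul_pos (by linarith : (0:ℤ) < b - a) (by linarith : (0:ℤ) < d - a)]
      have hmeas : a.toNat ≤ N := by omega
      rcases le_total d c with hdc | hcd
      · -- apply ih to (c, a, d)
        have heq' : cayley 1 c a d = 0 := by
          unfold cayley; rw [hd]; linear_combination heq
        obtain ⟨p, hp, n', m', h1', h2', h3'⟩ := ih c a d hmeas hc ha hdpos heq' hdc hca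
        refine ⟨p, hp, n' + m', n', h2', ?_, h1'⟩
        have hid := cheb_id p n' m'
        have hb' : b = 2 * a * c - d := by rw [hd]; ring
        rw [hb', h1', h2', h3']
        have e : n' + m' + n' = m' + 2 * n' := by omega
        rw [e]
        rw [Nat.add_comm m' n'] at hid
        linarith
      · -- apply ih to (d, a, c)
        have heq' : cayley 1 d a c = 0 := by
          unfold cayley; rw [hd]; linear_combination heq
        obtain ⟨p, hp, n', m', h1', h2', h3'⟩ := ih d a c hmeas hdpos ha hc heq' hcd hdle
        refine ⟨p, hp, n' + m', m', h2', ?_, h3'⟩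
        have hid := cheb_id p m' n'
        have hb' : b = 2 * a * c - d := by rw [hd]; ring
        rw [hb', h1', h2', h3']
        have e : n' + m' + m' = n' + 2 * m' := by omega
        rw [e]
        linarith

theorem stmt_6 (a b c : ℤ) (ha : 0 < a) (hb : 0 < b) (hc : 0 < c)
    (heq : cayley 1 a b c = 0) (hbmax : max a c ≤ b) :
    ∃ p : ℤ, 0 < p ∧ ∃ n m : ℕ,
      a = chebT p n ∧ b = chebT p (n + m) ∧ c = chebT p m := by
  rw [max_le_iff] at hbmax
  rcases le_total c a with h | h
  · exact key b.toNat a b c le_rfl ha hb hc heq h hbmax.1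
  · have heq' : cayley 1 c b a = 0 := by unfold cayley at *; linear_combination heq
    obtain ⟨p, hp, n, m, h1, h2, h3⟩ := key b.toNat c b a le_rfl hc hb ha heq' h hbmax.2
    exact ⟨p, hp, m, n, h3, by rwa [Nat.add_comm], h1⟩
end

section
/- Let y ≥ 2 be an integer. All positive integer solutions (z, a) of the Pell equation z² − (y²−1)a² = 1 are given by z = T_n(y) and a = U_{n−1}(y) for some positive integer n; conversely, for every positive integer n the pair (T_n(y), U_{n−1}(y)) is a solution. -/
/-- Chebyshev polynomials of the second kind evaluated at an integer:
`U 0 = 1`, `U 1 = 2x`, `U (n+2) = 2x·U (n+1) − U n`. -/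
def chebU (x : ℤ) : ℕ → ℤ
  | 0 => 1
  | 1 => 2 * x
  | n + 2 => 2 * x * chebU x (n + 1) - chebU x n

lemma chebT_eq_xz (a : ℕ) (a1 : 1 < a) : ∀ n, chebT (a : ℤ) n = Pell.xz a1 n
  | 0 => by simp [chebT, Pell.xz, Pell.xn_zero]
  | 1 => by simp [chebT, Pell.xz, Pell.xn_one]
  | n + 2 => by
    rw [chebT, chebT_eq_xz a a1 (n + 1), chebT_eq_xz a a1 n, Pell.xz_succ_succ]
    push_cast; ring

lemma chebU_eq_yz (a : ℕ) (a1 : 1 < a) : ∀ n, chebU (a : ℤ) n = Pell.yz a1 (n + 1)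
  | 0 => by simp [chebU, Pell.yz, Pell.yn_one]
  | 1 => by
    simp [chebU, Pell.yz, Pell.yn_succ, Pell.yn_one, Pell.xn_one]
    ring
  | n + 2 => by
    rw [chebU, chebU_eq_yz a a1 (n + 1), chebU_eq_yz a a1 n,
      show n + 2 + 1 = (n + 1) + 2 from rfl, Pell.yz_succ_succ a1 (n + 1)]
    push_cast; ring

theorem stmt_7 (y : ℤ) (hy : 2 ≤ y) :
    (∀ z a : ℤ, 0 < z → 0 < a → z ^ 2 - (y ^ 2 - 1) * a ^ 2 = 1 →
      ∃ n : ℕ, 0 < n ∧ z = chebT y n ∧ a = chebU y (n - 1)) ∧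
    (∀ n : ℕ, 0 < n →
      chebT y n ^ 2 - (y ^ 2 - 1) * chebU y (n - 1) ^ 2 = 1) := by
  set A := y.toNat with hA
  have hAy : (A : ℤ) = y := Int.toNat_of_nonneg (by omega)
  have a1 : 1 < A := by omega
  have hd : ((A * A - 1 : ℕ) : ℤ) = y ^ 2 - 1 := by
    have h2 : 2 ≤ A := by omega
    push_cast [Nat.cast_sub (by nlinarith : 1 ≤ A * A)]
    rw [hAy]; ring
  constructor
  · intro z a hz ha heq
    have hzn : ((z.toNat : ℤ)) = z := Int.toNat_of_nonneg hz.le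
    have han : ((a.toNat : ℤ)) = a := Int.toNat_of_nonneg ha.le
    have h1 : z.toNat * z.toNat = (A * A - 1) * a.toNat * a.toNat + 1 := by
      have h2 : (z.toNat : ℤ) * z.toNat = ((A * A - 1 : ℕ) : ℤ) * a.toNat * a.toNat + 1 := by
        rw [hzn, han, hd]; linear_combination heq
      exact_mod_cast h2
    have key : z.toNat * z.toNat - (A * A - 1) * a.toNat * a.toNat = 1 := by omega
    obtain ⟨n, hx, hyn⟩ := Pell.eq_pell a1 key
    have hn : 0 < n := by
      rcases Nat.eq_zero_or_pos n with h | h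
      · exfalso; rw [h, Pell.yn_zero] at hyn; omega
      · exact h
    refine ⟨n, hn, ?_, ?_⟩
    · rw [← hAy, chebT_eq_xz A a1 n, Pell.xz, ← hx, hzn]
    · rw [← hAy, chebU_eq_yz A a1 (n - 1), Nat.sub_add_cancel hn, Pell.yz, ← hyn, han]
  · intro n hn
    have h : Pell.xz a1 n * Pell.xz a1 n -
        ((A * A - 1 : ℕ) : ℤ) * Pell.yz a1 n * Pell.yz a1 n = 1 := Pell.pell_eqz a1 n
    have hT := chebT_eq_xz A a1 n
    have hU := chebU_eq_yz A a1 (n - 1)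
    rw [Nat.sub_add_cancel hn] at hU
    rw [← hAy, hT, hU]
    have hd' : ((A * A - 1 : ℕ) : ℤ) = (A : ℤ) ^ 2 - 1 := by rw [hd, ← hAy]
    rw [← hd']
    linear_combination h
end

section
/- Let p be a positive integer, n and m positive integers, and set d = T_n(p)² − 1. Then T_{n+m}(p) − T_{|n−m|}(p) is even, and the integers a = (T_{n+m}(p) − T_{|n−m|}(p))/2 and z = T_m(p) satisfy the generalized Pell equation a² − d·z² = −d. -/
lemma cheb_step (x : ℤ) : ∀ n : ℕ,
    chebT x (n + 1) = x * chebT x n + (x ^ 2 - 1) * chebV x n ∧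
    chebV x (n + 1) = chebT x n + x * chebV x n
  | 0 => by simp [chebT, chebV]
  | 1 => by
      constructor
      · show 2 * x * x - 1 = x * x + (x ^ 2 - 1) * 1; ring
      · show 2 * x * 1 - 0 = x + x * 1; ring
  | n + 2 => by
      obtain ⟨h1, h2⟩ := cheb_step x n
      have h3 : chebT x (n + 2) = x * chebT x (n + 1) + (x ^ 2 - 1) * chebV x (n + 1) :=
        (cheb_step x (n + 1)).1
      have h4 : chebV x (n + 2) = chebT x (n + 1) + x * chebV x (n + 1) :=
        (cheb_step x (n + 1)).2
      constructor
      · show 2 * x * chebT x (n + 2) - chebT x (n + 1) =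
          x * chebT x (n + 2) + (x ^ 2 - 1) * (2 * x * chebV x (n + 1) - chebV x n)
        linear_combination x * h3 + (x ^ 2 - 1) * h1 - (x ^ 2 - 1) * x * h2
      · show 2 * x * chebV x (n + 2) - chebV x (n + 1) =
          (2 * x * chebT x (n + 1) - chebT x n) + x * chebV x (n + 2)
        linear_combination x * h4 + (x ^ 2 - 1) * h2 - x * h1

lemma cheb_pell (x : ℤ) : ∀ n : ℕ, chebT x n ^ 2 - (x ^ 2 - 1) * chebV x n ^ 2 = 1 := by
  intro n
  induction n with
  | zero => simp [chebT, chebV]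
  | succ k ih =>
      obtain ⟨h1, h2⟩ := cheb_step x k
      rw [h1, h2]; ring_nf; linear_combination ih

lemma cheb_add (x : ℤ) : ∀ m n : ℕ,
    chebT x (n + m) = chebT x n * chebT x m + (x ^ 2 - 1) * chebV x n * chebV x m ∧
    chebV x (n + m) = chebT x n * chebV x m + chebV x n * chebT x m
  | 0, n => by simp [chebT, chebV]
  | 1, n => by
      obtain ⟨h1, h2⟩ := cheb_step x n
      constructor
      · rw [h1]; show x * chebT x n + (x ^ 2 - 1) * chebV x n =
          chebT x n * chebT x 1 + (x ^ 2 - 1) * chebV x n * chebV x 1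
        simp [chebT, chebV]; ring
      · rw [h2]; show chebT x n + x * chebV x n =
          chebT x n * chebV x 1 + chebV x n * chebT x 1
        simp [chebT, chebV]; ring
  | m + 2, n => by
      obtain ⟨h1, h2⟩ := cheb_add x m n
      obtain ⟨h3, h4⟩ := cheb_add x (m + 1) n
      have e1 : chebT x (n + (m + 2)) = 2 * x * chebT x (n + (m + 1)) - chebT x (n + m) := rfl
      have e2 : chebV x (n + (m + 2)) = 2 * x * chebV x (n + (m + 1)) - chebV x (n + m) := rfl
      have e3 : chebT x (m + 2) = 2 * x * chebT x (m + 1) - chebT x m := rfl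
      have e4 : chebV x (m + 2) = 2 * x * chebV x (m + 1) - chebV x m := rfl
      constructor
      · rw [e1, e3, e4, h1, h3]; ring
      · rw [e2, e4, e3, h2, h4]; ring

lemma cheb_sub (x : ℤ) (n m : ℕ) (h : m ≤ n) :
    chebT x (n - m) = chebT x n * chebT x m - (x ^ 2 - 1) * chebV x n * chebV x m := by
  obtain ⟨k, rfl⟩ := Nat.exists_eq_add_of_le h
  rw [Nat.add_sub_cancel_left]
  obtain ⟨h1, h2⟩ := cheb_add x m k
  rw [Nat.add_comm k m] at h1 h2
  have hp := cheb_pell x m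
  rw [h1, h2]
  linear_combination (-chebT x k) * hp

lemma cheb_diff (x : ℤ) (n m : ℕ) (h : m ≤ n) :
    chebT x (n + m) - chebT x (n - m) = 2 * ((x ^ 2 - 1) * chebV x n * chebV x m) := by
  obtain ⟨h1, _⟩ := cheb_add x m n
  rw [h1, cheb_sub x n m h]; ring

theorem stmt_8 (p : ℤ) (hp : 0 < p) (n m : ℕ) (hn : 0 < n) (hm : 0 < m) :
    2 ∣ (chebT p (n + m) - chebT p ((n : ℤ) - m).natAbs) ∧
    ((chebT p (n + m) - chebT p ((n : ℤ) - m).natAbs) / 2) ^ 2 -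
        (chebT p n ^ 2 - 1) * chebT p m ^ 2 = -(chebT p n ^ 2 - 1) := by
  have key : chebT p (n + m) - chebT p ((n : ℤ) - m).natAbs =
      2 * ((p ^ 2 - 1) * chebV p n * chebV p m) := by
    rcases le_total m n with h | h
    · have hab : ((n : ℤ) - m).natAbs = n - m := by omega
      rw [hab]; exact cheb_diff p n m h
    · have hab : ((n : ℤ) - m).natAbs = m - n := by omega
      rw [hab, Nat.add_comm n m]
      rw [cheb_diff p m n h]; ring
  refine ⟨⟨_, key⟩, ?_⟩
  rw [key, Int.mul_ediv_cancel_left _ (by norm_num)]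
  have h1 := cheb_pell p n
  have h2 := cheb_pell p m
  linear_combination (1 - chebT p m ^ 2) * h1 + (-(p ^ 2 - 1) * chebV p n ^ 2) * h2
end

section
/- Let s and b be positive integers such that s divides 2b, and let R : ℕ → ℚ be defined by R(0) = s, R(1) = b, R(n+1) = (2b/s)·R(n) − R(n−1). Then every R(k) is an integer, and for all non-negative integers n and m, C_s(R(n), R(n+m), R(m)) = 0, i.e., s(R(n)² + R(n+m)² + R(m)²) − s³ − 2·R(n)·R(n+m)·R(m) = 0. -/
theorem stmt_11 (s b : ℤ) (hs : 0 < s) (hb : 0 < b) (hdvd : s ∣ 2 * b)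
    (R : ℕ → ℚ) (hR0 : R 0 = (s : ℚ)) (hR1 : R 1 = (b : ℚ))
    (hRrec : ∀ n : ℕ, R (n + 2) = (2 * (b : ℚ) / (s : ℚ)) * R (n + 1) - R n) :
    (∀ k : ℕ, ∃ z : ℤ, R k = (z : ℚ)) ∧
    (∀ n m : ℕ, (s : ℚ) * (R n ^ 2 + R (n + m) ^ 2 + R m ^ 2) - (s : ℚ) ^ 3 -
      2 * R n * R (n + m) * R m = 0) := by
  have hs' : (s : ℚ) ≠ 0 := by exact_mod_cast hs.ne'
  -- division-free recurrence
  have hrec' : ∀ n : ℕ, (s : ℚ) * R (n + 2) = 2 * b * R (n + 1) - s * R n := by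
    intro n
    rw [hRrec n]
    field_simp
  -- key product identity
  have key : ∀ m k : ℕ, 2 * R (k + m) * R m = (s : ℚ) * (R (k + 2 * m) + R k) := by
    intro m
    induction m using Nat.twoStepInduction with
    | zero =>
      intro k
      simp only [Nat.add_zero, Nat.mul_zero, hR0]
      ring
    | one =>
      intro k
      simp only [show k + 2 * 1 = k + 2 by omega, hR1]
      linear_combination (-1 : ℚ) * hrec' k
    | more m ih ih1 =>
      intro k
      have h1 := ih1 (k + 1)
      have h2 := ih (k + 2)
      simp only [show k + 1 + (m + 1) = k + m + 2 by omega,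
        show k + 1 + 2 * (m + 1) = k + 2 * m + 3 by omega] at h1
      simp only [show k + 2 + m = k + m + 2 by omega,
        show k + 2 + 2 * m = k + 2 * m + 2 by omega] at h2
      have hm := hrec' m
      have hK := hrec' (k + 2 * m + 2)
      have hk0 := hrec' k
      simp only [show k + 2 * m + 2 + 2 = k + 2 * m + 4 by omega,
        show k + 2 * m + 2 + 1 = k + 2 * m + 3 by omega] at hK
      have H : (s : ℚ) * (2 * R (k + (m + 2)) * R (m + 2)) =
          (s : ℚ) * ((s : ℚ) * (R (k + 2 * (m + 2)) + R k)) := by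
        simp only [show k + (m + 2) = k + m + 2 by omega,
          show k + 2 * (m + 2) = k + 2 * m + 4 by omega]
        linear_combination (2 * R (k + m + 2)) * hm + (2 * (b : ℚ)) * h1
          - (s : ℚ) * h2 - (s : ℚ) * hK - (s : ℚ) * hk0
      exact mul_left_cancel₀ hs' H
  constructor
  · -- integrality
    obtain ⟨t, ht⟩ := hdvd
    have ht' : (2 * b : ℚ) = (s : ℚ) * t := by exact_mod_cast ht
    have hts : (2 * b : ℚ) / s = (t : ℚ) := by
      rw [div_eq_iff hs']
      linear_combination ht'
    have main : ∀ k : ℕ, (∃ z : ℤ, R k = (z : ℚ)) ∧ (∃ z : ℤ, R (k + 1) = (z : ℚ)) := by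
      intro k
      induction k with
      | zero => exact ⟨⟨s, hR0⟩, ⟨b, hR1⟩⟩
      | succ k ih =>
        obtain ⟨⟨z1, hz1⟩, ⟨z2, hz2⟩⟩ := ih
        refine ⟨⟨z2, hz2⟩, ⟨t * z2 - z1, ?_⟩⟩
        rw [hRrec k, show 2 * (b : ℚ) / s = (2 * b : ℚ) / s by ring, hts, hz1, hz2]
        push_cast
        ring
    exact fun k => (main k).1
  · -- Cayley identity
    intro n m
    rcases le_total m n with h | h
    · obtain ⟨k, rfl⟩ := Nat.exists_eq_add_of_le h
      have A := key m k
      have B := key (m + k) 0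
      have Bm := key m 0
      have D := key k (2 * m)
      simp only [show 0 + (m + k) = k + m by omega,
        show 0 + 2 * (m + k) = 2 * m + 2 * k by omega, hR0] at B
      simp only [Nat.zero_add, Nat.mul_zero, show 0 + 2 * m = 2 * m by omega, hR0] at Bm
      simp only [show 2 * m + k = k + 2 * m by omega] at D
      simp only [show m + k = k + m by omega] at B ⊢
      simp only [show k + m + m = k + 2 * m by omega]
      linear_combination ((s : ℚ) / 2) * B + ((s : ℚ) / 2) * Bm
        - (R (k + 2 * m)) * A - ((s : ℚ) / 2) * D
    · obtain ⟨k, rfl⟩ := Nat.exists_eq_add_of_le h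
      have A := key n k
      have B := key (n + k) 0
      have Bn := key n 0
      have D := key k (2 * n)
      simp only [show 0 + (n + k) = k + n by omega,
        show 0 + 2 * (n + k) = 2 * n + 2 * k by omega, hR0] at B
      simp only [Nat.zero_add, Nat.mul_zero, show 0 + 2 * n = 2 * n by omega, hR0] at Bn
      simp only [show 2 * n + k = k + 2 * n by omega] at D
      simp only [show n + k = k + n by omega] at B ⊢
      simp only [show n + (k + n) = k + 2 * n by omega]
      linear_combination ((s : ℚ) / 2) * B + ((s : ℚ) / 2) * Bn
        - (R (k + 2 * n)) * A - ((s : ℚ) / 2) * D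
end

section
/- Let s and b be positive integers, and let R : ℕ → ℚ be defined by R(0) = s, R(1) = b, R(n+1) = (2b/s)·R(n) − R(n−1). Then R(n) is an integer for every non-negative integer n if and only if s divides 2b. -/
/-!
Put `t = 2b/s`. If every `R n` is an integer, then so is every `t ^ n * R k`, because
`t * R (k + 1) = R (k + 2) + R k` and `t * R 0 = 2 * R 1`. Taking `k = 0` gives `s * t ^ n ∈ ℤ`
for all `n`, so every power of the denominator of `t` divides `s ≠ 0`, and `t` is an integer.
Conversely, if `t` is an integer the recurrence has integer coefficients.
-/

theorem Rat.den_pow_dvd_of_intCast_mul_pow_mem_bot {x : ℚ} {c : ℤ} {n : ℕ}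
    (h : (c : ℚ) * x ^ n ∈ (⊥ : Subring ℚ)) : (x.den : ℤ) ^ n ∣ c := by
  obtain ⟨z, hz⟩ := Subring.mem_bot.mp h
  have hclear : c * x.num ^ n = z * (x.den : ℤ) ^ n := by
    have hx : x ^ n = (x.num : ℚ) ^ n / (x.den : ℚ) ^ n := by rw [← div_pow, Rat.num_div_den]
    rw [hx] at hz
    field_simp at hz
    exact_mod_cast hz.symm
  exact (Rat.isCoprime_num_den x).symm.pow.dvd_of_dvd_mul_right ⟨z, hclear.trans (mul_comm _ _)⟩

theorem Rat.mem_bot_of_forall_intCast_mul_pow_mem_bot {x : ℚ} {c : ℤ} (hc : c ≠ 0)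
    (h : ∀ n : ℕ, (c : ℚ) * x ^ n ∈ (⊥ : Subring ℚ)) : x ∈ (⊥ : Subring ℚ) := by
  have hdvd : x.den ^ c.natAbs ∣ c.natAbs := by
    simpa [Int.natAbs_pow] using
      Int.natAbs_dvd_natAbs.mpr (Rat.den_pow_dvd_of_intCast_mul_pow_mem_bot (h c.natAbs))
  have hle : x.den ^ c.natAbs ≤ c.natAbs := Nat.le_of_dvd (Int.natAbs_pos.mpr hc) hdvd
  have hden : x.den = 1 := by
    by_contra hne
    exact (Nat.lt_pow_self (lt_of_le_of_ne x.den_pos (Ne.symm hne))).not_ge hle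
  exact Subring.mem_bot.mpr ⟨x.num, (Rat.den_eq_one_iff x).mp hden⟩

section ChebyshevRecurrence

variable {A : Type*} [CommRing A] (S : Subring A) {R : ℕ → A} {t : A}

theorem mem_of_chebyshev_recurrence (hrec : ∀ n, R (n + 2) = t * R (n + 1) - R n)
    (ht : t ∈ S) (h0 : R 0 ∈ S) (h1 : R 1 ∈ S) (n : ℕ) : R n ∈ S := by
  induction n using Nat.twoStepInduction with
  | zero => exact h0
  | one => exact h1
  | more n hn hn1 => rw [hrec]; exact sub_mem (mul_mem ht hn1) hn

-- `t * R 0 = 2 * R 1` says that the backward extension `R (-1) := t * R 0 - R 1` equals `R 1`.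
theorem pow_mul_mem_of_chebyshev_recurrence (hrec : ∀ n, R (n + 2) = t * R (n + 1) - R n)
    (hsymm : t * R 0 = 2 * R 1) (hR : ∀ n, R n ∈ S) (n : ℕ) : ∀ k, t ^ n * R k ∈ S := by
  induction n with
  | zero => simpa using hR
  | succ n ih =>
    rintro (_ | k)
    · rw [pow_succ, mul_assoc, hsymm, mul_left_comm]
      exact mul_mem (ofNat_mem S 2) (ih 1)
    · have hstep : t * R (k + 1) = R (k + 2) + R k := by rw [hrec]; ring
      rw [pow_succ, mul_assoc, hstep, mul_add]
      exact add_mem (ih _) (ih _)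

end ChebyshevRecurrence

theorem stmt_12_general (s b : ℤ) (hs : 0 < s)
    (R : ℕ → ℚ) (hR0 : R 0 = (s : ℚ)) (hR1 : R 1 = (b : ℚ))
    (hRrec : ∀ n : ℕ, R (n + 2) = (2 * (b : ℚ) / (s : ℚ)) * R (n + 1) - R n) :
    (∀ n : ℕ, ∃ z : ℤ, R n = (z : ℚ)) ↔ s ∣ 2 * b := by
  have hs0 : (s : ℚ) ≠ 0 := by exact_mod_cast hs.ne'
  set t : ℚ := 2 * b / s with ht
  have hsymm : t * R 0 = 2 * R 1 := by rw [ht, hR0, hR1]; field_simp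
  have hint : ∀ x : ℚ, (∃ z : ℤ, x = z) ↔ x ∈ (⊥ : Subring ℚ) := fun x => by
    simp only [Subring.mem_bot, eq_comm]
  simp only [hint]
  constructor
  · intro hR
    have hpow (n : ℕ) : (s : ℚ) * t ^ n ∈ (⊥ : Subring ℚ) := by
      simpa only [hR0, mul_comm] using pow_mul_mem_of_chebyshev_recurrence _ hRrec hsymm hR n 0
    obtain ⟨m, hm⟩ := Subring.mem_bot.mp (Rat.mem_bot_of_forall_intCast_mul_pow_mem_bot hs.ne' hpow)
    rw [ht, eq_div_iff hs0] at hm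
    exact ⟨m, by exact_mod_cast hm.symm.trans (mul_comm _ _)⟩
  · rintro ⟨m, hm⟩
    have htm : t = m := by rw [ht, div_eq_iff hs0]; exact_mod_cast hm.trans (mul_comm _ _)
    refine mem_of_chebyshev_recurrence _ hRrec ?_ ?_ ?_
    · rw [htm]; exact intCast_mem _ m
    · rw [hR0]; exact intCast_mem _ s
    · rw [hR1]; exact intCast_mem _ b

theorem stmt_12 (s b : ℤ) (hs : 0 < s) (hb : 0 < b)
    (R : ℕ → ℚ) (hR0 : R 0 = (s : ℚ)) (hR1 : R 1 = (b : ℚ))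
    (hRrec : ∀ n : ℕ, R (n + 2) = (2 * (b : ℚ) / (s : ℚ)) * R (n + 1) - R n) :
    (∀ n : ℕ, ∃ z : ℤ, R n = (z : ℚ)) ↔ s ∣ 2 * b :=
  stmt_12_general s b hs R hR0 hR1 hRrec
end

section
/- Let s ≠ 0 and y be rationals. Let R : ℕ → ℚ be defined by R(0) = s, R(1) = y, R(n+1) = (2y/s)·R(n) − R(n−1), and let R* : ℕ → ℚ be defined by R*(0) = 1, R*(1) = 2y/s, R*(n+1) = (2y/s)·R*(n) − R*(n−1). Then for every positive integer n, R(n)² − (y² − s²)·R*(n−1)² = s². -/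
theorem stmt_13 (s y : ℚ) (hs : s ≠ 0)
    (R : ℕ → ℚ) (hR0 : R 0 = s) (hR1 : R 1 = y)
    (hRrec : ∀ n : ℕ, R (n + 2) = (2 * y / s) * R (n + 1) - R n)
    (Rstar : ℕ → ℚ) (hRs0 : Rstar 0 = 1) (hRs1 : Rstar 1 = 2 * y / s)
    (hRsrec : ∀ n : ℕ, Rstar (n + 2) = (2 * y / s) * Rstar (n + 1) - Rstar n) :
    ∀ n : ℕ, 0 < n → R n ^ 2 - (y ^ 2 - s ^ 2) * Rstar (n - 1) ^ 2 = s ^ 2 := by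
  -- Pell identity for Rstar
  have pell : ∀ n : ℕ, Rstar n * Rstar (n + 2) = Rstar (n + 1) ^ 2 - 1 := by
    intro n
    induction n with
    | zero =>
      rw [hRsrec, hRs0, hRs1]; ring
    | succ k ih =>
      have h1 := hRsrec k
      have h2 : Rstar (k + 3) = (2 * y / s) * Rstar (k + 2) - Rstar (k + 1) :=
        hRsrec (k + 1)
      show Rstar (k + 1) * Rstar (k + 3) = Rstar (k + 2) ^ 2 - 1
      rw [h2]
      linear_combination ih - Rstar (k + 2) * h1
  -- closed form relation
  have rel : ∀ n : ℕ, R (n + 1) = s * Rstar (n + 1) - y * Rstar n := by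
    intro n
    induction n using Nat.strong_induction_on with
    | _ n ih =>
      match n with
      | 0 =>
        rw [hR1, hRs1, hRs0]
        field_simp
        ring
      | 1 =>
        rw [hRrec 0, hRsrec 0, hR1, hR0, hRs1, hRs0]
        field_simp
        ring
      | (k + 2) =>
        have h1 := ih k (by omega)
        have h2 : R (k + 2) = s * Rstar (k + 2) - y * Rstar (k + 1) :=
          ih (k + 1) (by omega)
        have h3 : R (k + 3) = (2 * y / s) * R (k + 2) - R (k + 1) := hRrec (k + 1)
        have h4 : Rstar (k + 3) = (2 * y / s) * Rstar (k + 2) - Rstar (k + 1) :=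
          hRsrec (k + 1)
        show R (k + 3) = s * Rstar (k + 3) - y * Rstar (k + 2)
        rw [h3, h4]
        linear_combination (2 * y / s) * h2 - h1 + y * hRsrec k
  intro n hn
  obtain ⟨m, rfl⟩ : ∃ m, n = m + 1 := ⟨n - 1, by omega⟩
  simp only [Nat.add_sub_cancel]
  have h := rel m
  have hp := pell m
  have key : s * Rstar (m + 2) = 2 * y * Rstar (m + 1) - s * Rstar m := by
    rw [hRsrec m]; field_simp
  rw [h]
  linear_combination (-(s^2)) * hp + (s * Rstar m) * key
end

section
/- Let s ≠ 0 and y be rationals. Let R : ℕ → ℚ be defined by R(0) = s, R(1) = y, R(n+1) = (2y/s)·R(n) − R(n−1), and let R* : ℕ → ℚ be defined by R*(0) = 1, R*(1) = 2y/s, R*(n+1) = (2y/s)·R*(n) − R*(n−1). Then for every integer n ≥ 2, R(n)·R(n−1) − (y² − s²)·R*(n−1)·R*(n−2) = s·y. -/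
/-!
Write `U` for the solution of `x (n + 2) = a * x (n + 1) - x n` with `U 0 = 1`, `U 1 = a`
(the Chebyshev polynomials of the second kind evaluated at `a / 2`). Every solution is
`u (n + 2) = u 1 * U (n + 1) - u 0 * U n`, and `U` satisfies the Cassini identity
`U (n + 1) ^ 2 - U (n + 2) * U n = 1`. Substituting both into `R n * R (n - 1)` leaves
`s * y + s * (s * a - 2 * y) * U (n - 2) ^ 2`, and `s * (s * (2 * y / s) - 2 * y) = 0`.
-/

section ChebyshevRecurrence

variable {A : Type*} [CommRing A]

def SolvesChebyshevRec (a : A) (u : ℕ → A) : Prop :=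
  ∀ n, u (n + 2) = a * u (n + 1) - u n

variable {a : A} {u U : ℕ → A}

theorem SolvesChebyshevRec.sq_sub_mul_eq_one (hU : SolvesChebyshevRec a U) (hU0 : U 0 = 1)
    (hU1 : U 1 = a) (n : ℕ) : U (n + 1) ^ 2 - U (n + 2) * U n = 1 := by
  induction n with
  | zero => rw [hU 0, hU1, hU0]; ring
  | succ k ih => rw [hU (k + 1)]; linear_combination ih + U (k + 2) * hU k

theorem SolvesChebyshevRec.eq_mul_sub_mul (hu : SolvesChebyshevRec a u)
    (hU : SolvesChebyshevRec a U) (hU0 : U 0 = 1) (hU1 : U 1 = a) (n : ℕ) :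
    u (n + 2) = u 1 * U (n + 1) - u 0 * U n := by
  induction n using Nat.twoStepInduction with
  | zero => rw [hu 0, hU1, hU0]; ring
  | one => rw [hu 1, hu 0, hU 0, hU1, hU0]; ring
  | more k ih₀ ih₁ =>
    rw [hu (k + 2)]
    linear_combination a * ih₁ - ih₀ - u 1 * hU (k + 1) + u 0 * hU k

theorem SolvesChebyshevRec.mul_succ_sub_mul (hu : SolvesChebyshevRec a u)
    (hU : SolvesChebyshevRec a U) (hU0 : U 0 = 1) (hU1 : U 1 = a) (n : ℕ) :
    u (n + 2) * u (n + 1) - (u 1 ^ 2 - u 0 ^ 2) * U (n + 1) * U n =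
      u 0 * u 1 + u 0 * (u 0 * a - 2 * u 1) * U n ^ 2 := by
  match n with
  | 0 => rw [hu 0, hU1, hU0]; ring
  | k + 1 =>
    rw [hu.eq_mul_sub_mul hU hU0 hU1 (k + 1), hu.eq_mul_sub_mul hU hU0 hU1 k]
    linear_combination u 0 * u 1 * hU.sq_sub_mul_eq_one hU0 hU1 k
      + u 0 ^ 2 * U (k + 1) * hU k

end ChebyshevRecurrence

theorem stmt_14_general (s y : ℚ)
    (R : ℕ → ℚ) (hR0 : R 0 = s) (hR1 : R 1 = y)
    (hRrec : ∀ n : ℕ, R (n + 2) = (2 * y / s) * R (n + 1) - R n)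
    (Rstar : ℕ → ℚ) (hRs0 : Rstar 0 = 1) (hRs1 : Rstar 1 = 2 * y / s)
    (hRsrec : ∀ n : ℕ, Rstar (n + 2) = (2 * y / s) * Rstar (n + 1) - Rstar n) :
    ∀ n : ℕ, 2 ≤ n →
      R n * R (n - 1) - (y ^ 2 - s ^ 2) * Rstar (n - 1) * Rstar (n - 2) = s * y := by
  intro n hn
  obtain ⟨m, rfl⟩ : ∃ m, n = m + 2 := ⟨n - 2, by omega⟩
  have hcancel : s * (s * (2 * y / s) - 2 * y) = 0 := by
    linear_combination 2 * y * mul_self_div_self s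
  have key := SolvesChebyshevRec.mul_succ_sub_mul hRrec hRsrec hRs0 hRs1 m
  rw [hR0, hR1, hcancel] at key
  simpa using key

theorem stmt_14 (s y : ℚ) (hs : s ≠ 0)
    (R : ℕ → ℚ) (hR0 : R 0 = s) (hR1 : R 1 = y)
    (hRrec : ∀ n : ℕ, R (n + 2) = (2 * y / s) * R (n + 1) - R n)
    (Rstar : ℕ → ℚ) (hRs0 : Rstar 0 = 1) (hRs1 : Rstar 1 = 2 * y / s)
    (hRsrec : ∀ n : ℕ, Rstar (n + 2) = (2 * y / s) * Rstar (n + 1) - Rstar n) :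
    ∀ n : ℕ, 2 ≤ n →
      R n * R (n - 1) - (y ^ 2 - s ^ 2) * Rstar (n - 1) * Rstar (n - 2) = s * y :=
  stmt_14_general s y R hR0 hR1 hRrec Rstar hRs0 hRs1 hRsrec
end

section
/- Let s ≠ 0 and p be rationals, and let R : ℕ → ℚ be defined by R(0) = s, R(1) = p, R(n+1) = (2p/s)·R(n) − R(n−1). Then for all non-negative integers n and m, 4(R(n)² − s²)(R(m)² − s²) = s²·(R(n+m) − R(|n−m|))². -/
private lemma ext_rec (s p : ℚ) (hs : s ≠ 0)
    (R : ℕ → ℚ) (hR0 : R 0 = s) (hR1 : R 1 = p)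
    (hRrec : ∀ n : ℕ, R (n + 2) = (2 * p / s) * R (n + 1) - R n) :
    ∀ k : ℤ, s * R (k + 2).natAbs + s * R k.natAbs = 2 * p * R (k + 1).natAbs := by
  intro k
  rcases k with k | k
  · simp only [Int.ofNat_eq_natCast]
    rw [show ((k : ℤ) + 2).natAbs = k + 2 by omega,
        show ((k : ℤ) + 1).natAbs = k + 1 by omega,
        show ((k : ℤ)).natAbs = k by omega]
    have := hRrec k
    field_simp at this
    linear_combination this
  · rw [Int.negSucc_eq]
    rcases k with _ | (_ | j)
    · rw [show (-((0:ℕ) + 1 : ℤ) + 2).natAbs = 1 by norm_num,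
          show (-((0:ℕ) + 1 : ℤ) + 1).natAbs = 0 by norm_num,
          show (-((0:ℕ) + 1 : ℤ)).natAbs = 1 by norm_num, hR0, hR1]
      ring
    · rw [show (-((1:ℕ) + 1 : ℤ) + 2).natAbs = 0 by norm_num,
          show (-((1:ℕ) + 1 : ℤ) + 1).natAbs = 1 by norm_num,
          show (-((1:ℕ) + 1 : ℤ)).natAbs = 2 by norm_num]
      have := hRrec 0
      field_simp at this
      linear_combination this
    · rw [show (-((j + 2 : ℕ) + 1 : ℤ) + 2).natAbs = j + 1 by omega,
          show (-((j + 2 : ℕ) + 1 : ℤ) + 1).natAbs = j + 2 by omega,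
          show (-((j + 2 : ℕ) + 1 : ℤ)).natAbs = j + 3 by omega]
      have := hRrec (j + 1)
      field_simp at this
      linear_combination this

private lemma key_add (s p : ℚ) (hs : s ≠ 0)
    (R : ℕ → ℚ) (hR0 : R 0 = s) (hR1 : R 1 = p)
    (hRrec : ∀ n : ℕ, R (n + 2) = (2 * p / s) * R (n + 1) - R n) :
    ∀ m : ℕ, ∀ n : ℤ,
      s * (R (n + m).natAbs + R (n - m).natAbs) = 2 * R n.natAbs * R m := by
  have E := ext_rec s p hs R hR0 hR1 hRrec
  intro m
  induction m using Nat.twoStepInduction with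
  | zero =>
    intro n
    simp [hR0]
    ring
  | one =>
    intro n
    have := E (n - 1)
    rw [show (n - 1 + 2 : ℤ) = n + 1 by ring, show (n - 1 + 1 : ℤ) = n by ring] at this
    push_cast
    rw [hR1]
    linear_combination this
  | more m ih0 ih1 =>
    intro n
    have i0 := ih0 n
    have i1 := ih1 n
    push_cast at i0 i1 ⊢
    rw [show (n + ((m : ℤ) + 2)) = n + m + 2 by ring,
        show (n - ((m : ℤ) + 2)) = n - m - 2 by ring]
    rw [show (n + ((m : ℤ) + 1)) = n + m + 1 by ring,
        show (n - ((m : ℤ) + 1)) = n - m - 1 by ring] at i1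
    have e1 := E (n + m)
    have e2 := E (n - m - 2)
    rw [show (n - (m:ℤ) - 2 + 2) = n - m by ring,
        show (n - (m:ℤ) - 2 + 1) = n - m - 1 by ring] at e2
    have r : s * R (m + 2) = 2 * p * R (m + 1) - s * R m := by
      rw [hRrec m]; field_simp
    apply mul_left_cancel₀ hs
    linear_combination s * e1 + s * e2 + 2 * p * i1 - s * i0
      - 2 * (R n.natAbs) * r

theorem stmt_15 (s p : ℚ) (hs : s ≠ 0)
    (R : ℕ → ℚ) (hR0 : R 0 = s) (hR1 : R 1 = p)
    (hRrec : ∀ n : ℕ, R (n + 2) = (2 * p / s) * R (n + 1) - R n) :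
    ∀ n m : ℕ, 4 * (R n ^ 2 - s ^ 2) * (R m ^ 2 - s ^ 2) =
      s ^ 2 * (R (n + m) - R ((n : ℤ) - m).natAbs) ^ 2 := by
  have K := key_add s p hs R hR0 hR1 hRrec
  intro n m
  have h1 := K m n
  rw [show ((n : ℤ) + m).natAbs = n + m by omega,
      show ((n : ℤ)).natAbs = n by omega] at h1
  have h2 := K n n
  rw [show ((n : ℤ) + n).natAbs = 2 * n by omega,
      show ((n : ℤ) - n).natAbs = 0 by omega,
      show ((n : ℤ)).natAbs = n by omega, hR0] at h2
  have h3 := K m m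
  rw [show ((m : ℤ) + m).natAbs = 2 * m by omega,
      show ((m : ℤ) - m).natAbs = 0 by omega,
      show ((m : ℤ)).natAbs = m by omega, hR0] at h3
  have h4 := K (((n : ℤ) - m).natAbs) ((n : ℤ) + m)
  rw [show (((n : ℤ) + m)).natAbs = n + m by omega] at h4
  have h5 : R (n + m) * R ((n : ℤ) - m).natAbs
      = R n ^ 2 + R m ^ 2 - s ^ 2 := by
    apply mul_left_cancel₀ hs
    rcases le_total (m : ℤ) n with h | h
    · rw [show ((n : ℤ) + m + (((n : ℤ) - m).natAbs : ℤ)).natAbs = 2 * n by omega,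
          show ((n : ℤ) + m - (((n : ℤ) - m).natAbs : ℤ)).natAbs = 2 * m by omega] at h4
      linear_combination (s * (h2 + h3 - h4)) / 2
    · rw [show ((n : ℤ) + m + (((n : ℤ) - m).natAbs : ℤ)).natAbs = 2 * m by omega,
          show ((n : ℤ) + m - (((n : ℤ) - m).natAbs : ℤ)).natAbs = 2 * n by omega] at h4
      linear_combination (s * (h2 + h3 - h4)) / 2
  linear_combination
    (-(s * (R (n + m) + R ((n : ℤ) - m).natAbs) + 2 * R n * R m)) * h1
    + 4 * s ^ 2 * h5
end

section
/- Let p be an integer and let L : ℕ → ℤ be defined by L(0) = 2, L(1) = p, L(n+1) = p·L(n) − L(n−1). Fix non-negative integers n and m, and set y = L(n), d = y² − 4, z = L(m), and a = L(n+m) − L(|n−m|). Then a² − d·z² = −4d. -/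
theorem stmt_18 (p : ℤ)
    (L : ℕ → ℤ) (hL0 : L 0 = 2) (hL1 : L 1 = p)
    (hLrec : ∀ n : ℕ, L (n + 2) = p * L (n + 1) - L n)
    (n m : ℕ) (y d z a : ℤ)
    (hy : y = L n) (hd : d = y ^ 2 - 4) (hz : z = L m)
    (ha : a = L (n + m) - L ((n : ℤ) - m).natAbs) :
    a ^ 2 - d * z ^ 2 = -4 * d := by
  have key : ∀ b j : ℕ, L (2 * b + j) + L j = L (b + j) * L b := by
    intro b
    induction b using Nat.twoStepInduction with
    | zero => intro j; simp [hL0]; ring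
    | one =>
      intro j
      have := hLrec j
      simp only [hL1]
      have h1 : 2 * 1 + j = j + 2 := by omega
      have h2 : 1 + j = j + 1 := by omega
      rw [h1, h2, this]; ring
    | more b ih1 ih2 =>
      intro j
      have e1 := ih2 (j + 1)
      have e2 := ih1 (j + 2)
      have r1 := hLrec (2 * b + j + 2)
      have r2 := hLrec j
      have r3 := hLrec b
      have h1 : 2 * (b + 2) + j = 2 * b + j + 2 + 2 := by omega
      have h2 : b + 2 + j = b + (j + 2) := by omega
      have h3 : 2 * (b + 1) + (j + 1) = 2 * b + j + 2 + 1 := by omega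
      have h4 : b + 1 + (j + 1) = b + (j + 2) := by omega
      have h5 : 2 * b + (j + 2) = 2 * b + j + 2 := by omega
      rw [h1, h2, r1, r3]
      rw [h3, h4] at e1
      rw [h5] at e2
      linear_combination p * e1 - e2 + r2
  rcases le_or_gt m n with hmn | hmn
  · have hab : ((n : ℤ) - m).natAbs = n - m := by omega
    have k1 := key m (n - m)
    have k2 := key (n - m) (2 * m)
    have k3 := key n 0
    have k4 := key m 0
    have e1 : 2 * m + (n - m) = n + m := by omega
    have e2 : m + (n - m) = n := by omega
    have e3 : 2 * (n - m) + 2 * m = 2 * n + 0 := by omega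
    have e4 : n - m + 2 * m = n + m := by omega
    rw [e1, e2] at k1
    rw [e3, e4] at k2
    simp only [Nat.add_zero, hL0] at k2 k3 k4
    rw [hab] at ha
    subst hy hz hd ha
    linear_combination (L (n + m) + L (n - m) + L n * L m) * k1 + 4 * k2 - 4 * k3 - 4 * k4
  · have hab : ((n : ℤ) - m).natAbs = m - n := by omega
    have k1 := key n (m - n)
    have k2 := key (m - n) (2 * n)
    have k3 := key n 0
    have k4 := key m 0
    have e1 : 2 * n + (m - n) = n + m := by omega
    have e2 : n + (m - n) = m := by omega
    have e3 : 2 * (m - n) + 2 * n = 2 * m + 0 := by omega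
    have e4 : m - n + 2 * n = n + m := by omega
    rw [e1, e2] at k1
    rw [e3, e4] at k2
    simp only [Nat.add_zero, hL0] at k2 k3 k4
    rw [hab] at ha
    subst hy hz hd ha
    linear_combination (L (n + m) + L (m - n) + L m * L n) * k1 + 4 * k2 - 4 * k3 - 4 * k4
end
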